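/- arXiv:2603.07117 — 8 statements merged into one kernel-verified Lean document; each statement's English description precedes it below -/
import Mathlib

section
/- For all real x, y ∈ [0, π/2], it holds that sin x · sin y ≥ sin((2/π)·x·y). -/
/-! Fix `y`, put `c = 2y/π ∈ [0, 1]` and `g t = sin y · sin t - sin (c t)`. Then `g` vanishes at
`t = 0` and at `t = π/2` (where `c t = y`), and it is concave on `[0, π/2]`: its second derivative
`c² sin (c t) - sin y · sin t` is nonpositive because `sin (c t) ≤ sin t` and, by Jordan's inequality,
`c² ≤ c ≤ sin y`. A concave function is at least the smaller of its endpoint values, so `g ≥ 0`. -/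

open Real Set

lemma hasDerivAt_sin_mul_sub_sin_const_mul (s c t : ℝ) :
    HasDerivAt (fun t => s * sin t - sin (c * t)) (s * cos t - c * cos (c * t)) t :=
  (((hasDerivAt_sin t).const_mul s).sub (hasDerivAt_const_mul (x := t) c).sin).congr_deriv
    (by ring)

lemma hasDerivAt_cos_mul_sub_cos_const_mul (s c t : ℝ) :
    HasDerivAt (fun t => s * cos t - c * cos (c * t)) (c ^ 2 * sin (c * t) - s * sin t) t :=
  (((hasDerivAt_cos t).const_mul s).sub
    ((hasDerivAt_const_mul (x := t) c).cos.const_mul c)).congr_deriv (by ring)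

lemma concaveOn_sin_mul_sub_sin_const_mul {s c : ℝ} (hc0 : 0 ≤ c) (hc1 : c ≤ 1) (hs : c ^ 2 ≤ s) :
    ConcaveOn ℝ (Icc 0 (π / 2)) (fun t => s * sin t - sin (c * t)) := by
  refine concaveOn_of_hasDerivWithinAt2_nonpos (convex_Icc _ _)
    (fun t _ => (hasDerivAt_sin_mul_sub_sin_const_mul s c t).continuousAt.continuousWithinAt)
    (fun t _ => (hasDerivAt_sin_mul_sub_sin_const_mul s c t).hasDerivWithinAt)
    (fun t _ => (hasDerivAt_cos_mul_sub_cos_const_mul s c t).hasDerivWithinAt) ?_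
  intro t ht
  rw [interior_Icc] at ht
  obtain ⟨ht0, htπ⟩ := Ioo_subset_Icc_self ht
  have hsin_ct : sin (c * t) ≤ sin t :=
    sin_le_sin_of_le_of_le_pi_div_two (by linarith [mul_nonneg hc0 ht0, pi_pos]) htπ
      (mul_le_of_le_one_left ht0 hc1)
  have hsin_t : 0 ≤ sin t := sin_nonneg_of_nonneg_of_le_pi ht0 (by linarith [pi_pos])
  calc c ^ 2 * sin (c * t) - s * sin t ≤ c ^ 2 * sin t - c ^ 2 * sin t := by gcongr
    _ = 0 := sub_self _

theorem stmt_3 (x y : ℝ) (hx0 : 0 ≤ x) (hx1 : x ≤ π / 2) (hy0 : 0 ≤ y) (hy1 : y ≤ π / 2) :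
    Real.sin x * Real.sin y ≥ Real.sin ((2 / π) * x * y) := by
  set c := 2 / π * y with hc
  have hc0 : 0 ≤ c := by positivity
  have hc1 : c ≤ 1 := by
    rw [hc, div_mul_eq_mul_div, div_le_one pi_pos]
    linarith
  have hc_sin : c ≤ sin y := mul_le_sin hy0 hy1
  have hconcave := concaveOn_sin_mul_sub_sin_const_mul hc0 hc1 (s := sin y) (by nlinarith)
  have hend : c * (π / 2) = y := by
    rw [hc]
    field_simp
  have hπ : (0 : ℝ) ≤ π / 2 := by positivity
  have hx : x ∈ segment ℝ 0 (π / 2) := by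
    rw [segment_eq_Icc hπ]
    exact ⟨hx0, hx1⟩
  have hg_nonneg := hconcave.ge_on_segment (left_mem_Icc.2 hπ) (right_mem_Icc.2 hπ) hx
  simp only [sin_zero, mul_zero, hend, sin_pi_div_two, mul_one, sub_self, min_self] at hg_nonneg
  rw [show 2 / π * x * y = c * x by ring]
  linarith
end

section
/- For every real number ℓ ≥ 1 and every real x with 0 ≤ x ≤ π/2, it holds that sin(π/(2ℓ)) · sin x ≥ sin(x/ℓ). -/
open Real

/- `t ↦ c cos (c t) sin t - sin (c t) cos t` vanishes at `0` and has derivative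
`(1 - c²) sin (c t) sin t ≥ 0` on `[0, π]`. -/
lemma sin_mul_mul_cos_le {c : ℝ} (hc0 : 0 ≤ c) (hc1 : c ≤ 1) {t : ℝ} (ht0 : 0 ≤ t)
    (htπ : t ≤ π) : sin (c * t) * cos t ≤ c * cos (c * t) * sin t := by
  set g : ℝ → ℝ := fun u => c * cos (c * u) * sin u - sin (c * u) * cos u
  have hg : ∀ u, HasDerivAt g ((1 - c ^ 2) * (sin (c * u) * sin u)) u := by
    intro u
    have hcu : HasDerivAt (fun u : ℝ => c * u) c u := by
      simpa using (hasDerivAt_id u).const_mul c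
    have := (((hasDerivAt_cos (c * u)).comp u hcu).const_mul c).mul (hasDerivAt_sin u) |>.sub
      (((hasDerivAt_sin (c * u)).comp u hcu).mul (hasDerivAt_cos u))
    exact this.congr_deriv (by simp only [Function.comp_apply]; ring)
  have hmono : MonotoneOn g (Set.Icc 0 π) := by
    refine monotoneOn_of_deriv_nonneg (convex_Icc 0 π)
      (fun u _ => (hg u).continuousAt.continuousWithinAt)
      (fun u _ => (hg u).differentiableAt.differentiableWithinAt) fun u hu => ?_
    rw [interior_Icc] at hu
    rw [(hg u).deriv]
    have hcu : c * u ≤ π := (mul_le_of_le_one_left hu.1.le hc1).trans hu.2.le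
    have h1 : 0 ≤ 1 - c ^ 2 := by nlinarith
    exact mul_nonneg h1 (mul_nonneg (sin_nonneg_of_nonneg_of_le_pi (mul_nonneg hc0 hu.1.le) hcu)
      (sin_nonneg_of_nonneg_of_le_pi hu.1.le hu.2.le))
  have := hmono ⟨le_rfl, pi_pos.le⟩ ⟨ht0, htπ⟩ ht0
  simp only [g, mul_zero, cos_zero, sin_zero, mul_one, mul_zero, sub_zero] at this
  linarith

lemma monotoneOn_sin_mul_div_sin {c : ℝ} (hc0 : 0 ≤ c) (hc1 : c ≤ 1) :
    MonotoneOn (fun t => sin (c * t) / sin t) (Set.Ioo 0 π) := by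
  have hsin : ∀ t ∈ Set.Ioo 0 π, sin t ≠ 0 := fun t ht => (sin_pos_of_pos_of_lt_pi ht.1 ht.2).ne'
  have hderiv : ∀ t ∈ Set.Ioo 0 π, HasDerivAt (fun t => sin (c * t) / sin t)
      ((cos (c * t) * c * sin t - sin (c * t) * cos t) / sin t ^ 2) t := by
    intro t ht
    have hct : HasDerivAt (fun u : ℝ => c * u) c t := by
      simpa using (hasDerivAt_id t).const_mul c
    exact ((hasDerivAt_sin (c * t)).comp t hct).div (hasDerivAt_sin t) (hsin t ht)
  refine monotoneOn_of_deriv_nonneg (convex_Ioo 0 π)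
    (fun t ht => (hderiv t ht).continuousAt.continuousWithinAt)
    (fun t ht => (hderiv t (interior_subset ht)).differentiableAt.differentiableWithinAt)
    fun t ht => ?_
  rw [interior_Ioo] at ht
  rw [(hderiv t ht).deriv]
  have := sin_mul_mul_cos_le hc0 hc1 ht.1.le ht.2.le
  exact div_nonneg (by linarith) (sq_nonneg _)

theorem stmt_4 (ℓ x : ℝ) (hℓ : 1 ≤ ℓ) (hx0 : 0 ≤ x) (hx1 : x ≤ π / 2) :
    Real.sin (π / (2 * ℓ)) * Real.sin x ≥ Real.sin (x / ℓ) := by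
  rcases hx0.eq_or_lt with rfl | hx
  · simp
  have hℓ0 : 0 < ℓ := by linarith
  have hπ2 : π / 2 ∈ Set.Ioo 0 π := ⟨by positivity, by linarith [pi_pos]⟩
  have h := monotoneOn_sin_mul_div_sin (inv_nonneg.2 hℓ0.le) (inv_le_one_of_one_le₀ hℓ)
    ⟨hx, hx1.trans_lt hπ2.2⟩ hπ2 hx1
  simp only [sin_pi_div_two, div_one] at h
  rw [div_le_iff₀ (sin_pos_of_pos_of_lt_pi hx (hx1.trans_lt hπ2.2))] at h
  calc sin (x / ℓ) = sin (ℓ⁻¹ * x) := by ring_nf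
    _ ≤ sin (ℓ⁻¹ * (π / 2)) * sin x := h
    _ = sin (π / (2 * ℓ)) * sin x := by ring_nf
end

section
/- Fix y ∈ (0, π/2) and define f(x) = sin x · sin y − sin((2/π)·x·y) for x ∈ [0, π/2]. Then f''(x) < 0 for all x ∈ (0, π/2), i.e., f is strictly concave on (0, π/2). -/
open Real

/-!
With `c = 2y/π` we have `f x = a sin x - sin (c x)` for `a = sin y`, so
`f'' x = c² sin (c x) - a sin x`. Jordan's inequality gives `0 < c < 1` and `c ≤ a`, so
`c² sin (c x) < c² sin x ≤ a sin x`, since `sin` increases on `[0, π/2]` and `c x < x`.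
-/

section SinSubSinMul

variable (a c : ℝ)

theorem hasDerivAt_sin_mul_sub_sin_mul (x : ℝ) :
    HasDerivAt (fun x => sin x * a - sin (c * x)) (cos x * a - c * cos (c * x)) x := by
  exact (((hasDerivAt_sin x).mul_const a).sub
    ((hasDerivAt_sin (c * x)).comp x (hasDerivAt_const_mul c))).congr_deriv (by ring)

theorem hasDerivAt_cos_mul_sub_mul_cos_mul (x : ℝ) :
    HasDerivAt (fun x => cos x * a - c * cos (c * x)) (c ^ 2 * sin (c * x) - sin x * a) x := by
  exact (((hasDerivAt_cos x).mul_const a).sub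
    (((hasDerivAt_cos (c * x)).comp x (hasDerivAt_const_mul c)).const_mul c)).congr_deriv (by ring)

theorem deriv_deriv_sin_mul_sub_sin_mul :
    deriv (deriv fun x => sin x * a - sin (c * x)) = fun x => c ^ 2 * sin (c * x) - sin x * a := by
  have hd : deriv (fun x => sin x * a - sin (c * x)) = fun x => cos x * a - c * cos (c * x) :=
    funext fun x => (hasDerivAt_sin_mul_sub_sin_mul a c x).deriv
  rw [hd]
  exact funext fun x => (hasDerivAt_cos_mul_sub_mul_cos_mul a c x).deriv

end SinSubSinMul

theorem sin_mul_lt_sin {c x : ℝ} (hc0 : 0 < c) (hc1 : c < 1) (hx0 : 0 < x) (hx : x ≤ π / 2) :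
    sin (c * x) < sin x :=
  sin_lt_sin_of_lt_of_le_pi_div_two (by nlinarith [pi_pos]) hx (mul_lt_of_lt_one_left hx0 hc1)

theorem sq_mul_sin_mul_lt_sin_mul {a c x : ℝ} (hc0 : 0 < c) (hc1 : c < 1) (hca : c ^ 2 ≤ a)
    (hx0 : 0 < x) (hx : x ≤ π / 2) : c ^ 2 * sin (c * x) < sin x * a := by
  have hsin : 0 < sin x := sin_pos_of_pos_of_lt_pi hx0 (by linarith [pi_pos])
  calc c ^ 2 * sin (c * x) < c ^ 2 * sin x := by gcongr; exact sin_mul_lt_sin hc0 hc1 hx0 hx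
    _ ≤ sin x * a := by rw [mul_comm]; gcongr

theorem stmt_5 (y : ℝ) (hy0 : 0 < y) (hy1 : y < π / 2)
    (f : ℝ → ℝ) (hf : f = fun x => Real.sin x * Real.sin y - Real.sin ((2 / π) * x * y)) :
    (∀ x, 0 < x → x < π / 2 → deriv (deriv f) x < 0) ∧
      StrictConcaveOn ℝ (Set.Ioo 0 (π / 2)) f := by
  obtain ⟨c, hc⟩ : ∃ c, c = 2 / π * y := ⟨_, rfl⟩
  have hc0 : 0 < c := by rw [hc]; positivity
  have hc1 : c < 1 := by
    rw [hc, div_mul_eq_mul_div, div_lt_one pi_pos]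
    linarith
  have hca : c ^ 2 ≤ sin y :=
    calc c ^ 2 ≤ c := by nlinarith
      _ ≤ sin y := hc ▸ mul_le_sin hy0.le hy1.le
  have hf' : f = fun x => sin x * sin y - sin (c * x) := by
    rw [hf]
    funext x
    rw [hc, mul_right_comm]
  have hf'' : ∀ x, 0 < x → x < π / 2 → deriv (deriv f) x < 0 := by
    intro x hx0 hx1
    rw [hf', deriv_deriv_sin_mul_sub_sin_mul, sub_neg]
    exact sq_mul_sin_mul_lt_sin_mul hc0 hc1 hca hx0 hx1.le
  refine ⟨hf'', strictConcaveOn_of_deriv2_neg (convex_Ioo _ _) ?_ ?_⟩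
  · rw [hf']
    fun_prop
  · rw [interior_Ioo]
    exact fun x hx => hf'' x hx.1 hx.2
end

section
/- Let t > 3 be an integer and let i, i' be integers with 1 ≤ i < i' ≤ t. Set φ_i = (π/(2t))·i and φ_{i'} = (π/(2t))·i'. Then for any real angles θ, θ', |sin φ_i · sin φ_{i'} · cos(θ − θ') + cos φ_i · cos φ_{i'}| ≤ cos(π/(2t)). -/
/-!
Write `x = sin a sin b cos φ + cos a cos b`. Since `sin a sin b ≥ 0`, `x` is monotone in `cos φ ∈ [-1, 1]`,
so `cos (a + b) ≤ x ≤ cos (a - b)`. For `a = iπ/(2t)`, `b = i'π/(2t)` the angles `b - a` and `a + b` lie in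
`[π/(2t), π - π/(2t)]`, where `|cos|` is at most `cos (π/(2t))`.
-/

open Real

namespace Real

theorem cos_add_le_sin_mul_sin_mul_cos_add_cos_mul_cos {a b : ℝ} (hab : 0 ≤ sin a * sin b) (φ : ℝ) :
    cos (a + b) ≤ sin a * sin b * cos φ + cos a * cos b := by
  rw [cos_add]
  nlinarith [neg_one_le_cos φ]

theorem sin_mul_sin_mul_cos_add_cos_mul_cos_le_cos_sub {a b : ℝ} (hab : 0 ≤ sin a * sin b) (φ : ℝ) :
    sin a * sin b * cos φ + cos a * cos b ≤ cos (a - b) := by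
  rw [cos_sub]
  nlinarith [cos_le_one φ]

theorem abs_sin_mul_sin_mul_cos_add_cos_mul_cos_le {a b u : ℝ} (ha : 0 ≤ a) (hu : 0 ≤ u)
    (hgap : a + u ≤ b) (hsum : a + b + u ≤ π) (φ : ℝ) :
    |sin a * sin b * cos φ + cos a * cos b| ≤ cos u := by
  have hab : 0 ≤ sin a * sin b :=
    mul_nonneg (sin_nonneg_of_nonneg_of_le_pi ha (by linarith))
      (sin_nonneg_of_nonneg_of_le_pi (by linarith) (by linarith))
  rw [abs_le]
  constructor
  · calc -cos u = cos (π - u) := (cos_pi_sub u).symm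
      _ ≤ cos (a + b) := cos_le_cos_of_nonneg_of_le_pi (by linarith) (by linarith) (by linarith)
      _ ≤ _ := cos_add_le_sin_mul_sin_mul_cos_add_cos_mul_cos hab φ
  · calc _ ≤ cos (a - b) := sin_mul_sin_mul_cos_add_cos_mul_cos_le_cos_sub hab φ
      _ = cos (b - a) := by rw [← cos_neg, neg_sub]
      _ ≤ cos u := cos_le_cos_of_nonneg_of_le_pi hu (by linarith) (by linarith)

end Real

theorem stmt_6_general (t i i' : ℕ) (hii' : i < i') (hi't : i' ≤ t)
    (θ θ' : ℝ) :
    |Real.sin ((π / (2 * t)) * i) * Real.sin ((π / (2 * t)) * i') * Real.cos (θ - θ') +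
      Real.cos ((π / (2 * t)) * i) * Real.cos ((π / (2 * t)) * i')| ≤
      Real.cos (π / (2 * t)) := by
  have ht : (0 : ℝ) < t := by exact_mod_cast (Nat.zero_le i).trans_lt (hii'.trans_le hi't)
  have hu : 0 < π / (2 * t) := by positivity
  have hgap : (i : ℝ) + 1 ≤ i' := by exact_mod_cast hii'
  have hsum : (i : ℝ) + i' + 1 ≤ 2 * t := by norm_cast; omega
  have hπ : π / (2 * t) * (2 * t) = π := by field_simp
  refine abs_sin_mul_sin_mul_cos_add_cos_mul_cos_le (by positivity) hu.le ?_ ?_ (θ - θ')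
  · nlinarith
  · nlinarith

theorem stmt_6 (t i i' : ℕ) (ht : 3 < t) (hi : 1 ≤ i) (hii' : i < i') (hi't : i' ≤ t)
    (θ θ' : ℝ) :
    |Real.sin ((π / (2 * t)) * i) * Real.sin ((π / (2 * t)) * i') * Real.cos (θ - θ') +
      Real.cos ((π / (2 * t)) * i) * Real.cos ((π / (2 * t)) * i')| ≤
      Real.cos (π / (2 * t)) :=
  stmt_6_general t i i' hii' hi't θ θ'
end

section
/- Let t > 3 and 1 ≤ i ≤ t be integers, and set φ_i = (π/(2t))·i. Then sin²(φ_i) · cos(π/(2i)) + cos²(φ_i) ≤ cos(π/(2t)). -/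
/-! The double-angle formula turns the left side into `1 - 2 sin² φ sin² (π/(4i))` and the right
side into `1 - 2 sin² (π/(4t))`, so it suffices that `sin (π/(4t)) ≤ sin φ · sin (π/(4i))`.
With `c = 1/(2i)` this is `sin (c x) ≤ sin x · sin (c π/2)` at `x = φ`: both sides agree at
`x = 0` and `x = π/2`, and their difference is concave on `[0, π/2]` because
`c² ≤ c ≤ sin (c π/2)` (Jordan's inequality) and `sin (c x) ≤ sin x`. -/

open Real Set

namespace Real

lemma concaveOn_mul_sin_sub_sin_mul {a c : ℝ} (hc0 : 0 ≤ c) (hc1 : c ≤ 1) (hca : c ≤ a) :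
    ConcaveOn ℝ (Icc 0 (π / 2)) (fun x ↦ a * sin x - sin (c * x)) := by
  refine concaveOn_of_hasDerivWithinAt2_nonpos (convex_Icc _ _) (by fun_prop)
    (f' := fun x ↦ a * cos x - c * cos (c * x))
    (f'' := fun x ↦ -(a * sin x) + c ^ 2 * sin (c * x)) ?_ ?_ ?_
  · intro x _
    have hd := ((hasDerivAt_sin x).const_mul a).sub ((hasDerivAt_sin (c * x)).comp x
      ((hasDerivAt_id x).const_mul c))
    exact (hd.congr_deriv (by simp [mul_comm])).hasDerivWithinAt
  · intro x _
    have hd := ((hasDerivAt_cos x).const_mul a).sub (((hasDerivAt_cos (c * x)).comp x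
      ((hasDerivAt_id x).const_mul c)).const_mul c)
    exact (hd.congr_deriv (by simp; ring)).hasDerivWithinAt
  · intro x hx
    rw [interior_Icc] at hx
    obtain ⟨hx0, hx⟩ := hx
    have hcx0 : 0 ≤ c * x := mul_nonneg hc0 hx0.le
    have hcx : c * x ≤ x := mul_le_of_le_one_left hx0.le hc1
    have hsin_cx : 0 ≤ sin (c * x) :=
      sin_nonneg_of_nonneg_of_le_pi hcx0 (by linarith [pi_pos])
    have hsin_le : sin (c * x) ≤ sin x :=
      sin_le_sin_of_le_of_le_pi_div_two (by linarith [pi_pos]) hx.le hcx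
    have hc2 : c ^ 2 ≤ a := by nlinarith
    have hbound : c ^ 2 * sin (c * x) ≤ a * sin x :=
      calc c ^ 2 * sin (c * x) ≤ a * sin (c * x) := mul_le_mul_of_nonneg_right hc2 hsin_cx
        _ ≤ a * sin x := mul_le_mul_of_nonneg_left hsin_le (hc0.trans hca)
    linarith

lemma sin_mul_le_sin_mul_sin {c x : ℝ} (hc0 : 0 ≤ c) (hc1 : c ≤ 1) (hx0 : 0 ≤ x)
    (hx : x ≤ π / 2) : sin (c * x) ≤ sin x * sin (c * (π / 2)) := by
  have hjordan : c ≤ sin (c * (π / 2)) := by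
    have := mul_le_sin (x := c * (π / 2)) (by positivity)
      (mul_le_of_le_one_left (by positivity) hc1)
    rwa [show 2 / π * (c * (π / 2)) = c by field_simp] at this
  have hmin := (concaveOn_mul_sin_sub_sin_mul hc0 hc1 hjordan).min_le_of_mem_Icc
    (left_mem_Icc.2 (by positivity)) (right_mem_Icc.2 (by positivity)) ⟨hx0, hx⟩
  simp only [mul_zero, sin_zero, sin_pi_div_two, mul_one, sub_self, min_self] at hmin
  linarith

lemma cos_eq_one_sub_two_mul_sin_half_sq (θ : ℝ) : cos θ = 1 - 2 * sin (θ / 2) ^ 2 := by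
  have h := cos_sq_add_sin_sq (θ / 2)
  conv_lhs => rw [← mul_div_cancel₀ θ two_ne_zero, cos_two_mul']
  linarith

lemma sin_sq_mul_cos_add_cos_sq (φ θ : ℝ) :
    sin φ ^ 2 * cos θ + cos φ ^ 2 = 1 - 2 * sin φ ^ 2 * sin (θ / 2) ^ 2 := by
  rw [cos_eq_one_sub_two_mul_sin_half_sq θ, cos_sq']
  ring

lemma sin_sq_mul_cos_add_cos_sq_le_cos {φ θ ψ : ℝ} (hψ : 0 ≤ sin (ψ / 2))
    (h : sin (ψ / 2) ≤ sin φ * sin (θ / 2)) : sin φ ^ 2 * cos θ + cos φ ^ 2 ≤ cos ψ := by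
  have hsq := pow_le_pow_left₀ hψ h 2
  rw [sin_sq_mul_cos_add_cos_sq, cos_eq_one_sub_two_mul_sin_half_sq ψ]
  nlinarith

end Real

theorem stmt_8_general (t i : ℕ) (hi1 : 1 ≤ i) (hit : i ≤ t) :
    Real.sin ((π / (2 * t)) * i) ^ 2 * Real.cos (π / (2 * i)) +
      Real.cos ((π / (2 * t)) * i) ^ 2 ≤ Real.cos (π / (2 * t)) := by
  have hi : (1 : ℝ) ≤ i := by exact_mod_cast hi1
  have ht : (i : ℝ) ≤ t := by exact_mod_cast hit
  have ht0 : (0 : ℝ) < t := by linarith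
  have hφ : π / (2 * t) * i ≤ π / 2 := by
    rw [div_mul_eq_mul_div, div_le_div_iff₀ (by linarith) two_pos]
    nlinarith [pi_pos]
  have hkey := sin_mul_le_sin_mul_sin (c := 1 / (2 * i)) (by positivity)
    (by rw [div_le_one (by linarith : (0 : ℝ) < 2 * i)]; linarith) (by positivity) hφ
  rw [show 1 / (2 * i) * (π / (2 * t) * i) = π / (2 * t) / 2 by field_simp,
    show 1 / (2 * i) * (π / 2) = π / (2 * i) / 2 by field_simp] at hkey
  refine sin_sq_mul_cos_add_cos_sq_le_cos ?_ hkey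
  exact sin_nonneg_of_nonneg_of_le_pi (by positivity)
    (by rw [div_div]; exact div_le_self pi_pos.le (by linarith))

theorem stmt_8 (t i : ℕ) (ht : 3 < t) (hi1 : 1 ≤ i) (hit : i ≤ t) :
    Real.sin ((π / (2 * t)) * i) ^ 2 * Real.cos (π / (2 * i)) +
      Real.cos ((π / (2 * t)) * i) ^ 2 ≤ Real.cos (π / (2 * t)) :=
  stmt_8_general t i hi1 hit
end

section
/- Let t > 3 be an integer and let Ω ⊂ ℝ³ be the set consisting of the north pole (0,0,1)ᵀ together with, for each i ∈ {1,…,t−1}, the 4i points (sin φ_i cos θ_{i,j}, sin φ_i sin θ_{i,j}, cos φ_i)ᵀ with φ_i = πi/(2t), θ_{i,j} = πj/(2i), j ∈ {0,…,4i−1}, and for i = t, the 2t points (cos θ_{t,j}, sin θ_{t,j}, 0)ᵀ with θ_{t,j} = πj/(2t), j ∈ {0,…,2t−1}. Then every pair of distinct vectors u, u' ∈ Ω satisfies |⟨u, u'⟩| ≤ cos(π/(2t)). -/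
open Real

/-!
In spherical coordinates the inner product of two points with polar angles `a`, `b` and azimuth
difference `Δ` is `sin a sin b cos Δ + cos a cos b`. The polar angles of `Ω` are the multiples
`i δ`, `0 ≤ i ≤ t`, of `δ = π / (2t)` (the pole is level `0`, the equator level `t`).
For two different levels the inner product lies between `cos (a + b) ≥ -cos δ` and
`cos (b - a) ≤ cos δ`. On the equator it is `cos Δ` with `δ ≤ |Δ| ≤ π - δ`. On the ring of level
`0 < i < t` it is at least `cos 2a ≥ -cos δ` and at most `1 - 2 sin² a sin² (π / (4i))`, which is
below `cos δ = 1 - 2 sin² (π / (4t))` because `sin (π i / (2t)) sin (π / (4i)) ≥ π / (4t)`; this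
last inequality follows from Taylor bounds for the sines when `2i ≤ t`, and from
`sin (π i / (2t)) = cos (π (t - i) / (2t)) ≥ 1 - (π (t - i) / (2t))² / 2` when `t ≤ 2i`.
-/

noncomputable def sphCos (a b Δ : ℝ) : ℝ := sin a * sin b * cos Δ + cos a * cos b

noncomputable def sphPoint (φ θ : ℝ) : Fin 3 → ℝ := ![sin φ * cos θ, sin φ * sin θ, cos φ]

lemma sum_sphPoint_mul_sphPoint (φ θ φ' θ' : ℝ) :
    ∑ k : Fin 3, sphPoint φ θ k * sphPoint φ' θ' k = sphCos φ φ' (θ - θ') := by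
  simp only [sphPoint, sphCos, Fin.sum_univ_three, Matrix.cons_val_zero, Matrix.cons_val_one,
    Matrix.cons_val, cos_sub]
  ring

lemma cos_le_cos_of_le_of_le_two_pi_sub {α y : ℝ} (hα : 0 ≤ α) (h₁ : α ≤ y)
    (h₂ : y ≤ 2 * π - α) : cos y ≤ cos α := by
  rcases le_total y π with hy | hy
  · exact cos_le_cos_of_nonneg_of_le_pi hα hy h₁
  · rw [← cos_two_pi_sub y]
    exact cos_le_cos_of_nonneg_of_le_pi hα (by linarith) (by linarith)

lemma abs_cos_le_cos_of_le_of_le_pi_sub {α y : ℝ} (hα : 0 ≤ α) (h₁ : α ≤ y)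
    (h₂ : y ≤ π - α) : |cos y| ≤ cos α := by
  rw [abs_le, ← cos_pi_sub]
  exact ⟨cos_le_cos_of_nonneg_of_le_pi (by linarith) (by linarith) h₂,
    cos_le_cos_of_nonneg_of_le_pi hα (by linarith) h₁⟩

lemma neg_cos_le_sphCos {a b d : ℝ} (Δ : ℝ) (ha : 0 ≤ a) (hb : 0 ≤ b) (hd : 0 ≤ d)
    (hab : a + b ≤ π - d) : -cos d ≤ sphCos a b Δ := by
  have hs : 0 ≤ sin a * sin b := mul_nonneg (sin_nonneg_of_nonneg_of_le_pi ha (by linarith))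
    (sin_nonneg_of_nonneg_of_le_pi hb (by linarith))
  calc -cos d = cos (π - d) := (cos_pi_sub d).symm
    _ ≤ cos (a + b) := cos_le_cos_of_nonneg_of_le_pi (by linarith) (by linarith) hab
    _ = cos a * cos b - sin a * sin b := cos_add a b
    _ ≤ sphCos a b Δ := by unfold sphCos; nlinarith [neg_one_le_cos Δ]

lemma sphCos_le_cos {a b d : ℝ} (Δ : ℝ) (hs : 0 ≤ sin a * sin b) (hd : 0 ≤ d)
    (h₁ : d ≤ b - a) (h₂ : b - a ≤ π) : sphCos a b Δ ≤ cos d :=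
  calc sphCos a b Δ ≤ cos b * cos a + sin b * sin a := by unfold sphCos; nlinarith [cos_le_one Δ]
    _ = cos (b - a) := (cos_sub b a).symm
    _ ≤ cos d := cos_le_cos_of_nonneg_of_le_pi hd h₂ h₁

lemma abs_sphCos_le {a b d : ℝ} (Δ : ℝ) (ha : 0 ≤ a) (hd : 0 ≤ d) (h₁ : a + d ≤ b)
    (h₂ : a + b ≤ π - d) : |sphCos a b Δ| ≤ cos d := by
  have hs : 0 ≤ sin a * sin b := mul_nonneg (sin_nonneg_of_nonneg_of_le_pi ha (by linarith))
    (sin_nonneg_of_nonneg_of_le_pi (by linarith) (by linarith))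
  exact abs_le.2 ⟨neg_cos_le_sphCos Δ ha (by linarith) hd h₂,
    sphCos_le_cos Δ hs hd (by linarith) (by linarith)⟩

lemma sphCos_self_le_cos_two_mul {a β d Δ : ℝ} (hΔ : cos Δ ≤ cos (2 * β)) (hd : 0 ≤ sin d)
    (h : sin d ≤ sin a * sin β) : sphCos a a Δ ≤ cos (2 * d) := by
  unfold sphCos
  rw [cos_two_mul_eq_one_sub] at hΔ ⊢
  nlinarith [sin_sq_add_cos_sq a, mul_le_mul_of_nonneg_left hΔ (mul_self_nonneg (sin a)),
    mul_le_mul h h hd (hd.trans h)]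

lemma pi_div_four_le_sin_mul_sin_of_two_mul_le {t x : ℝ} (hx : 1 ≤ x) (h : 2 * x ≤ t) :
    π / (4 * t) ≤ sin (π / (2 * t) * x) * sin (π / (4 * x)) := by
  have ht : 0 < t := by linarith
  have hπ := pi_gt_three
  have hπ' := pi_lt_d2
  have hsin {y : ℝ} (h0 : 0 ≤ y) (hy : y ≤ π / 4) : y * (1 - π ^ 2 / 96) ≤ sin y := by
    refine le_trans ?_ (sin_ge_sub_cube h0)
    nlinarith [mul_le_mul_of_nonneg_left (pow_le_pow_left₀ h0 hy 2) h0]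
  have hc : 0 ≤ 1 - π ^ 2 / 96 := by nlinarith
  have ha : π / (2 * t) * x ≤ π / 4 := by
    rw [div_mul_eq_mul_div, div_le_div_iff₀ (by positivity) (by norm_num)]; nlinarith
  have hb : π / (4 * x) ≤ π / 4 :=
    div_le_div_of_nonneg_left (by positivity) (by norm_num) (by linarith)
  calc π / (4 * t) ≤ (π / (2 * t) * x * (1 - π ^ 2 / 96)) * (π / (4 * x) * (1 - π ^ 2 / 96)) := by
        rw [show π / (2 * t) * x * (1 - π ^ 2 / 96) * (π / (4 * x) * (1 - π ^ 2 / 96))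
          = π / (4 * t) * (π * (1 - π ^ 2 / 96) ^ 2 / 2) by field_simp]
        refine le_mul_of_one_le_right (by positivity) ?_
        rw [le_div_iff₀ (by norm_num)]
        nlinarith
    _ ≤ sin (π / (2 * t) * x) * sin (π / (4 * x)) :=
        mul_le_mul (hsin (by positivity) ha) (hsin (by positivity) hb)
          (mul_nonneg (by positivity) hc)
          (sin_nonneg_of_nonneg_of_le_pi (by positivity) (by linarith))

lemma pi_div_four_le_sin_mul_sin_of_le_two_mul {t x : ℝ} (ht : 4 ≤ t) (hx : x + 1 ≤ t)
    (h : t ≤ 2 * x) : π / (4 * t) ≤ sin (π / (2 * t) * x) * sin (π / (4 * x)) := by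
  have hπ := pi_gt_three
  have hπ' := pi_lt_d2
  have hx0 : 0 < x := by linarith
  have hδ : π / (2 * t) ≤ 1 := by rw [div_le_one (by positivity)]; linarith
  have hb : π / (4 * x) ≤ π / (2 * t) := by
    rw [div_le_div_iff₀ (by positivity) (by positivity)]; nlinarith
  have hcos : 1 - (π / (2 * t) * (t - x)) ^ 2 / 2 ≤ sin (π / (2 * t) * x) := by
    rw [← cos_pi_div_two_sub, show π / 2 - π / (2 * t) * x = π / (2 * t) * (t - x) by field_simp]
    exact one_sub_sq_div_two_le_cos
  have hsin : π / (4 * x) * (1 - (π / (2 * t)) ^ 2 / 6) ≤ sin (π / (4 * x)) := by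
    refine le_trans ?_ (sin_ge_sub_cube (by positivity))
    nlinarith [mul_le_mul_of_nonneg_left (pow_le_pow_left₀ (by positivity) hb 2)
      (by positivity : (0 : ℝ) ≤ π / (4 * x))]
  have hcos0 : 0 ≤ 1 - (π / (2 * t) * (t - x)) ^ 2 / 2 := by
    have : π / (2 * t) * (t - x) ≤ 1 := by
      rw [div_mul_eq_mul_div, div_le_one (by positivity)]; nlinarith
    have h0 : 0 ≤ π / (2 * t) * (t - x) := mul_nonneg (by positivity) (by linarith)
    nlinarith [mul_le_mul this this h0 zero_le_one]
  have hpoly : π ^ 2 * (3 * (t - x) ^ 2 + 1) ≤ 24 * t * (t - x) := by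
    have hπ2 : π ^ 2 ≤ 10 := by nlinarith
    nlinarith [mul_le_mul_of_nonneg_right hπ2 (by positivity : (0 : ℝ) ≤ 3 * (t - x) ^ 2 + 1),
      mul_nonneg (sub_nonneg.2 h) (by linarith : (0 : ℝ) ≤ t - x),
      mul_nonneg (by linarith : (0 : ℝ) ≤ t - 4) (by linarith : (0 : ℝ) ≤ t - x)]
  calc π / (4 * t)
      ≤ (1 - (π / (2 * t) * (t - x)) ^ 2 / 2) * (π / (4 * x) * (1 - (π / (2 * t)) ^ 2 / 6)) := by
        rw [div_le_iff₀ (by positivity)]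
        field_simp
        nlinarith [mul_le_mul_of_nonneg_left hpoly (by positivity : (0 : ℝ) ≤ 8 * t ^ 2),
          pow_pos pi_pos 4, sq_nonneg (t - x)]
    _ ≤ sin (π / (2 * t) * x) * sin (π / (4 * x)) :=
        mul_le_mul hcos hsin
          (mul_nonneg (by positivity) (by nlinarith [pow_le_one₀ (by positivity) hδ (n := 2)]))
          (hcos0.trans hcos)

lemma pi_div_four_le_sin_mul_sin {t x : ℝ} (ht : 4 ≤ t) (hx : 1 ≤ x) (hxt : x + 1 ≤ t) :
    π / (4 * t) ≤ sin (π / (2 * t) * x) * sin (π / (4 * x)) :=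
  (le_total (2 * x) t).elim (pi_div_four_le_sin_mul_sin_of_two_mul_le hx)
    (pi_div_four_le_sin_mul_sin_of_le_two_mul ht hxt)

lemma le_abs_mul_natCast_sub_mul_natCast {c : ℝ} (hc : 0 ≤ c) {n j j' : ℕ} (hj : j < n)
    (hj' : j' < n) (hne : j ≠ j') : c ≤ |c * j - c * j'| ∧ |c * j - c * j'| ≤ c * (n - 1) := by
  rw [← mul_sub, abs_mul, abs_of_nonneg hc]
  have hj : (j : ℝ) + 1 ≤ n := by exact_mod_cast hj
  have hj' : (j' : ℝ) + 1 ≤ n := by exact_mod_cast hj'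
  have h₁ : 1 ≤ |(j : ℝ) - j'| := by
    rcases hne.lt_or_gt with h | h
    · have : (j : ℝ) + 1 ≤ j' := by exact_mod_cast h
      exact le_abs.2 (Or.inr (by linarith))
    · have : (j' : ℝ) + 1 ≤ j := by exact_mod_cast h
      exact le_abs.2 (Or.inl (by linarith))
  exact ⟨le_mul_of_one_le_right hc h₁,
    mul_le_mul_of_nonneg_left (abs_sub_le_iff.2 ⟨by linarith, by linarith⟩) hc⟩

lemma abs_sphCos_levels_le_of_ne {t i i' : ℕ} (hi : i ≤ t) (hi' : i' ≤ t) (hne : i ≠ i')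
    (Δ : ℝ) : |sphCos (π / (2 * t) * i) (π / (2 * t) * i') Δ| ≤ cos (π / (2 * t)) := by
  wlog h : i < i' generalizing i i'
  · rw [sphCos, mul_comm (sin _), mul_comm (cos _)]
    exact this hi' hi hne.symm (hne.symm.lt_of_le (not_lt.1 h))
  have ht : (0 : ℝ) < t := by exact_mod_cast (Nat.zero_le i).trans_lt (h.trans_le hi')
  have h₁ : (i : ℝ) + 1 ≤ i' := by exact_mod_cast h
  have h₂ : (i : ℝ) + i' + 1 ≤ 2 * t := by
    have : (i' : ℝ) ≤ t := by exact_mod_cast hi'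
    linarith
  have hδ : π / (2 * t) * (2 * t) = π := by field_simp
  apply abs_sphCos_le Δ (by positivity) (by positivity)
  · nlinarith [mul_le_mul_of_nonneg_left h₁ (by positivity : (0 : ℝ) ≤ π / (2 * t))]
  · nlinarith [mul_le_mul_of_nonneg_left h₂ (by positivity : (0 : ℝ) ≤ π / (2 * t))]

lemma abs_sphCos_level_le_of_lt {t i : ℕ} (ht : 4 ≤ t) (hi : 0 < i) (hit : i < t) {Δ : ℝ}
    (hΔ₁ : π / (2 * i) ≤ |Δ|) (hΔ₂ : |Δ| ≤ 2 * π - π / (2 * i)) :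
    |sphCos (π / (2 * t) * i) (π / (2 * t) * i) Δ| ≤ cos (π / (2 * t)) := by
  have ht' : (4 : ℝ) ≤ t := by exact_mod_cast ht
  have hi' : (1 : ℝ) ≤ i := by exact_mod_cast hi
  have hit' : (i : ℝ) + 1 ≤ t := by exact_mod_cast hit
  have hδ : π / (2 * t) * (2 * t) = π := by field_simp
  refine abs_le.2 ⟨neg_cos_le_sphCos Δ (by positivity) (by positivity) (by positivity) ?_, ?_⟩
  · have h₂ : 2 * (i : ℝ) + 1 ≤ 2 * t := by linarith
    nlinarith [mul_le_mul_of_nonneg_left h₂ (by positivity : (0 : ℝ) ≤ π / (2 * t))]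
  · have hcos : cos Δ ≤ cos (2 * (π / (4 * i))) := by
      rw [← cos_abs Δ, show 2 * (π / (4 * i)) = π / (2 * i) by ring]
      exact cos_le_cos_of_le_of_le_two_pi_sub (by positivity) hΔ₁ hΔ₂
    have hsin : sin (π / (4 * t)) ≤ sin (π / (2 * t) * i) * sin (π / (4 * i)) :=
      (sin_le (by positivity)).trans (pi_div_four_le_sin_mul_sin ht' hi' hit')
    calc sphCos (π / (2 * t) * i) (π / (2 * t) * i) Δ ≤ cos (2 * (π / (4 * t))) :=
          sphCos_self_le_cos_two_mul hcos (sin_nonneg_of_nonneg_of_le_pi (by positivity)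
            (div_le_self pi_pos.le (by linarith))) hsin
      _ = cos (π / (2 * t)) := by ring_nf

lemma abs_sphCos_equator_le {t : ℕ} (ht : 0 < t) {Δ : ℝ} (hΔ₁ : π / (2 * t) ≤ |Δ|)
    (hΔ₂ : |Δ| ≤ π - π / (2 * t)) :
    |sphCos (π / (2 * t) * t) (π / (2 * t) * t) Δ| ≤ cos (π / (2 * t)) := by
  have ht0 : (t : ℝ) ≠ 0 := by positivity
  rw [sphCos, show π / (2 * t) * t = π / 2 by field_simp, sin_pi_div_two, cos_pi_div_two,
    ← cos_abs Δ]
  simpa using abs_cos_le_cos_of_le_of_le_pi_sub (by positivity) hΔ₁ hΔ₂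

/-- Number of points of `Ω` with polar angle `π i / (2 t)`; the `j`-th has azimuth `π j / (2 i)`. -/
def ringSize (t i : ℕ) : ℕ := if i = 0 then 1 else if i < t then 4 * i else 2 * t

lemma abs_sphCos_same_level_le {t i j j' : ℕ} (ht : 4 ≤ t) (hi : i ≤ t) (hj : j < ringSize t i)
    (hj' : j' < ringSize t i) (hne : j ≠ j') :
    |sphCos (π / (2 * t) * i) (π / (2 * t) * i) (π / (2 * i) * j - π / (2 * i) * j')|
      ≤ cos (π / (2 * t)) := by
  unfold ringSize at hj hj'
  split_ifs at hj hj' with h0 hit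
  · omega
  · have hi0 : (i : ℝ) ≠ 0 := by exact_mod_cast h0
    obtain ⟨h₁, h₂⟩ := le_abs_mul_natCast_sub_mul_natCast (c := π / (2 * i)) (by positivity)
      hj hj' hne
    exact abs_sphCos_level_le_of_lt ht (Nat.pos_of_ne_zero h0) hit h₁
      (h₂.trans_eq (by push_cast; field_simp; ring))
  · obtain rfl : i = t := by omega
    have hi0 : (i : ℝ) ≠ 0 := by exact_mod_cast h0
    obtain ⟨h₁, h₂⟩ := le_abs_mul_natCast_sub_mul_natCast (c := π / (2 * i)) (by positivity)
      hj hj' hne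
    exact abs_sphCos_equator_le (Nat.pos_of_ne_zero h0) h₁
      (h₂.trans_eq (by push_cast; field_simp))

lemma exists_eq_sphPoint_of_mem {t : ℕ} {u : Fin 3 → ℝ}
    (hu : u ∈ {![0, 0, 1]} ∪
      (⋃ i ∈ Set.Icc 1 (t - 1), ⋃ j ∈ Set.Iio (4 * i),
        {![Real.sin ((π / (2 * t)) * i) * Real.cos ((π / (2 * i)) * j),
           Real.sin ((π / (2 * t)) * i) * Real.sin ((π / (2 * i)) * j),
           Real.cos ((π / (2 * t)) * i)]}) ∪
      (⋃ j ∈ Set.Iio (2 * t),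
        {![Real.cos ((π / (2 * t)) * j), Real.sin ((π / (2 * t)) * j), 0]})) :
    ∃ i ≤ t, ∃ j < ringSize t i, u = sphPoint (π / (2 * t) * i) (π / (2 * i) * j) := by
  simp only [Set.mem_union, Set.mem_iUnion, Set.mem_singleton_iff, Set.mem_Icc, Set.mem_Iio,
    exists_prop] at hu
  rcases hu with (rfl | ⟨i, ⟨hi₁, hi₂⟩, j, hj, rfl⟩) | ⟨j, hj, rfl⟩
  · exact ⟨0, Nat.zero_le t, 0, by simp [ringSize], by simp [sphPoint]⟩
  · refine ⟨i, by omega, j, ?_, rfl⟩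
    rwa [ringSize, if_neg (by omega), if_pos (by omega)]
  · have ht : (t : ℝ) ≠ 0 := by exact_mod_cast (show t ≠ 0 by omega)
    refine ⟨t, le_rfl, j, ?_, ?_⟩
    · rwa [ringSize, if_neg (by omega), if_neg (lt_irrefl t)]
    · simp [sphPoint, show π / (2 * t) * t = π / 2 by field_simp]

theorem stmt_10 (t : ℕ) (ht : 3 < t) (Ω : Set (Fin 3 → ℝ))
    (hΩ : Ω = {![0, 0, 1]} ∪
      (⋃ i ∈ Set.Icc 1 (t - 1), ⋃ j ∈ Set.Iio (4 * i),
        {![Real.sin ((π / (2 * t)) * i) * Real.cos ((π / (2 * i)) * j),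
           Real.sin ((π / (2 * t)) * i) * Real.sin ((π / (2 * i)) * j),
           Real.cos ((π / (2 * t)) * i)]}) ∪
      (⋃ j ∈ Set.Iio (2 * t),
        {![Real.cos ((π / (2 * t)) * j), Real.sin ((π / (2 * t)) * j), 0]})) :
    ∀ u ∈ Ω, ∀ u' ∈ Ω, u ≠ u' →
      |∑ k : Fin 3, u k * u' k| ≤ Real.cos (π / (2 * t)) := by
  subst hΩ
  intro u hu u' hu' hne
  obtain ⟨i, hi, j, hj, rfl⟩ := exists_eq_sphPoint_of_mem hu
  obtain ⟨i', hi', j', hj', rfl⟩ := exists_eq_sphPoint_of_mem hu'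
  rw [sum_sphPoint_mul_sphPoint]
  rcases eq_or_ne i i' with rfl | hii'
  · exact abs_sphCos_same_level_le ht hi hj hj' (by rintro rfl; exact hne rfl)
  · exact abs_sphCos_levels_le_of_ne hi hi' hii' _
end

section
/- Let H be an r × n real matrix with unit-norm columns, 1 ≤ m ≤ r+1, and 0 ≤ ρ < 1 such that for every j, every (m−1)-subset J' of {0,…,n−1}∖{j}, and every nonzero u in the span of {h_{j'} : j' ∈ J'}, |⟨h_j, u⟩|/‖u‖₂ ≤ ρ. Let J ⊆ {0,…,n−1} with |J| = m, and let u = Σ_{j∈J} a_j h_j with ‖u‖₂ ≤ 2n. Then |a_j| ≤ 2n/√(1 − ρ²) for every j ∈ J. -/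
open RealInnerProductSpace

section InnerProductSpace

variable {E : Type*} [NormedAddCommGroup E] [InnerProductSpace ℝ E]

lemma abs_inner_le_mul_norm_of_div_le {α β : E} {ρ : ℝ}
    (hβ : β ≠ 0 → |⟪α, β⟫| / ‖β‖ ≤ ρ) : |⟪α, β⟫| ≤ ρ * ‖β‖ := by
  rcases eq_or_ne β 0 with rfl | hβ0
  · simp
  · exact (div_le_iff₀ (norm_pos_iff.mpr hβ0)).1 (hβ hβ0)

/-- `‖a α + β‖² = a² + 2a⟪α, β⟫ + ‖β‖² ≥ (‖β‖ - ρ|a|)² + (1 - ρ²) a²`. -/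
lemma one_sub_sq_mul_sq_le_norm_smul_add_sq {α β : E} {a ρ : ℝ} (hα : ‖α‖ = 1)
    (hαβ : |⟪α, β⟫| ≤ ρ * ‖β‖) : (1 - ρ ^ 2) * a ^ 2 ≤ ‖a • α + β‖ ^ 2 := by
  have hexpand : ‖a • α + β‖ ^ 2 = a ^ 2 + 2 * (a * ⟪α, β⟫) + ‖β‖ ^ 2 := by
    rw [norm_add_sq_real, real_inner_smul_left, norm_smul, hα, mul_one, Real.norm_eq_abs, sq_abs]
  have hcross : -(|a| * (ρ * ‖β‖)) ≤ a * ⟪α, β⟫ := by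
    have := mul_le_mul_of_nonneg_left hαβ (abs_nonneg a)
    rw [← abs_mul] at this
    linarith [neg_abs_le (a * ⟪α, β⟫)]
  nlinarith [sq_nonneg (‖β‖ - ρ * |a|), sq_abs a]

lemma abs_le_norm_smul_add_div_sqrt {α β : E} {a ρ : ℝ} (hα : ‖α‖ = 1) (hρ0 : 0 ≤ ρ)
    (hρ1 : ρ < 1) (hαβ : |⟪α, β⟫| ≤ ρ * ‖β‖) :
    |a| ≤ ‖a • α + β‖ / √(1 - ρ ^ 2) := by
  have hs : 0 < 1 - ρ ^ 2 := by nlinarith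
  rw [le_div_iff₀ (Real.sqrt_pos.mpr hs)]
  refine (pow_le_pow_iff_left₀ (by positivity) (norm_nonneg _) two_ne_zero).1 ?_
  rw [mul_pow, sq_abs, Real.sq_sqrt hs.le, mul_comm]
  exact one_sub_sq_mul_sq_le_norm_smul_add_sq hα hαβ

end InnerProductSpace

theorem stmt_13_general (r n m : ℕ)
    (h : Fin n → EuclideanSpace ℝ (Fin r)) (hunit : ∀ j, ‖h j‖ = 1)
    (ρ : ℝ) (hρ0 : 0 ≤ ρ) (hρ1 : ρ < 1)
    (hcoh : ∀ j : Fin n, ∀ J' : Finset (Fin n), j ∉ J' → J'.card = m - 1 →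
      ∀ u ∈ Submodule.span ℝ (h '' (J' : Set (Fin n))), u ≠ 0 →
        |(⟪h j, u⟫)| / ‖u‖ ≤ ρ)
    (J : Finset (Fin n)) (hJ : J.card = m) (a : Fin n → ℝ)
    (u : EuclideanSpace ℝ (Fin r)) (hu : u = ∑ j ∈ J, a j • h j)
    (hnorm : ‖u‖ ≤ 2 * n) :
    ∀ j ∈ J, |a j| ≤ 2 * n / Real.sqrt (1 - ρ ^ 2) := by
  intro j hj
  set β := ∑ j' ∈ J.erase j, a j' • h j'
  have hβ_mem : β ∈ Submodule.span ℝ (h '' ((J.erase j : Finset (Fin n)) : Set (Fin n))) :=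
    Submodule.sum_mem _ fun i hi => Submodule.smul_mem _ _ (Submodule.subset_span ⟨i, hi, rfl⟩)
  have hu_split : u = a j • h j + β := by
    rw [hu, Finset.add_sum_erase J (fun i => a i • h i) hj]
  have hinner : |⟪h j, β⟫| ≤ ρ * ‖β‖ :=
    abs_inner_le_mul_norm_of_div_le <| hcoh j (J.erase j) (Finset.notMem_erase j J)
      (by rw [Finset.card_erase_of_mem hj, hJ]) β hβ_mem
  calc |a j| ≤ ‖u‖ / √(1 - ρ ^ 2) :=
        hu_split ▸ abs_le_norm_smul_add_div_sqrt (hunit j) hρ0 hρ1 hinner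
    _ ≤ 2 * n / √(1 - ρ ^ 2) := by gcongr

theorem stmt_13 (r n m : ℕ) (hm1 : 1 ≤ m) (hmr : m ≤ r + 1)
    (h : Fin n → EuclideanSpace ℝ (Fin r)) (hunit : ∀ j, ‖h j‖ = 1)
    (ρ : ℝ) (hρ0 : 0 ≤ ρ) (hρ1 : ρ < 1)
    (hcoh : ∀ j : Fin n, ∀ J' : Finset (Fin n), j ∉ J' → J'.card = m - 1 →
      ∀ u ∈ Submodule.span ℝ (h '' (J' : Set (Fin n))), u ≠ 0 →
        |(⟪h j, u⟫)| / ‖u‖ ≤ ρ)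
    (J : Finset (Fin n)) (hJ : J.card = m) (a : Fin n → ℝ)
    (u : EuclideanSpace ℝ (Fin r)) (hu : u = ∑ j ∈ J, a j • h j)
    (hnorm : ‖u‖ ≤ 2 * n) :
    ∀ j ∈ J, |a j| ≤ 2 * n / Real.sqrt (1 - ρ ^ 2) :=
  stmt_13_general r n m h hunit ρ hρ0 hρ1 hcoh J hJ a u hu hnorm
end

section
/- Let 0 ≤ ρ' ≤ ρ < 1, let n > 0 be real, set θ = n·√((1+ρ)/(1−ρ)), and suppose ξ₀, ξ are real numbers with |ξ₀| > θ and |ξ| ≤ |ξ₀|·ρ' + √(1 − ρ'²)·n. Then |ξ₀| > |ξ|. -/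
/-!
Writing `s' = √((1 + ρ') / (1 - ρ'))`, one has `√(1 - ρ'²) = (1 - ρ') s'`, and `s' ≤ √((1 + ρ) / (1 - ρ))`
because `x ↦ (1 + x) / (1 - x)` is increasing on `x < 1`. Hence `n s' ≤ θ < |ξ₀|` and
`|ξ| ≤ ρ' |ξ₀| + (1 - ρ') n s' < ρ' |ξ₀| + (1 - ρ') |ξ₀| = |ξ₀|`.
-/

theorem one_add_div_one_sub_le_of_le {x y : ℝ} (hxy : x ≤ y) (hy : y < 1) :
    (1 + x) / (1 - x) ≤ (1 + y) / (1 - y) := by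
  rw [div_le_div_iff₀ (by linarith) (by linarith)]
  nlinarith

theorem sqrt_one_sub_sq_eq_mul_sqrt {x : ℝ} (hx : x < 1) :
    √(1 - x ^ 2) = (1 - x) * √((1 + x) / (1 - x)) := by
  have hx' : (1 : ℝ) - x ≠ 0 := by linarith
  have hfactor : 1 - x ^ 2 = (1 + x) / (1 - x) * (1 - x) ^ 2 := by
    field_simp
    ring
  rw [hfactor, Real.sqrt_mul' _ (sq_nonneg _), Real.sqrt_sq (by linarith), mul_comm]

theorem stmt_16_general (ρ ρ' n θ ξ₀ ξ : ℝ) (hρ'ρ : ρ' ≤ ρ) (hρ1 : ρ < 1)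
    (hn : 0 < n) (hθ : θ = n * Real.sqrt ((1 + ρ) / (1 - ρ)))
    (hξ₀ : |ξ₀| > θ) (hξ : |ξ| ≤ |ξ₀| * ρ' + Real.sqrt (1 - ρ' ^ 2) * n) :
    |ξ₀| > |ξ| := by
  have hρ'1 : ρ' < 1 := hρ'ρ.trans_lt hρ1
  have hθ' : n * √((1 + ρ') / (1 - ρ')) ≤ θ := hθ ▸
    mul_le_mul_of_nonneg_left (Real.sqrt_le_sqrt (one_add_div_one_sub_le_of_le hρ'ρ hρ1)) hn.le
  rw [sqrt_one_sub_sq_eq_mul_sqrt hρ'1] at hξ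
  nlinarith [mul_lt_mul_of_pos_left (hθ'.trans_lt hξ₀) (sub_pos.2 hρ'1)]

theorem stmt_16 (ρ ρ' n θ ξ₀ ξ : ℝ) (hρ'0 : 0 ≤ ρ') (hρ'ρ : ρ' ≤ ρ) (hρ1 : ρ < 1)
    (hn : 0 < n) (hθ : θ = n * Real.sqrt ((1 + ρ) / (1 - ρ)))
    (hξ₀ : |ξ₀| > θ) (hξ : |ξ| ≤ |ξ₀| * ρ' + Real.sqrt (1 - ρ' ^ 2) * n) :
    |ξ₀| > |ξ| :=
  stmt_16_general ρ ρ' n θ ξ₀ ξ hρ'ρ hρ1 hn hθ hξ₀ hξ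
end
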